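/- Soundness of DmbCcl with respect to swap Kripke models: for every set of formulas Γ ∪ {φ} ⊆ For(Σ), if Γ ⊢_DmbCcl φ then Γ ⊨_DmbCcl φ. -/

import Mathlib

/-- Formulas over the signature Σ = {∧, ∨, →, ¬, ∘, O}, with countably many
propositional variables. -/
inductive Form : Type
  | var : ℕ → Form
  | and : Form → Form → Form
  | or : Form → Form → Form
  | imp : Form → Form → Form
  | neg : Form → Form
  | circ : Form → Form
  | obl : Form → Form

namespace Form
/-- ⊥_α := (α ∧ ¬α) ∧ ∘α -/
def bot (α : Form) : Form := (α.and α.neg).and α.circ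
end Form

/-- Theorems of DmbCcl: the DmbC axioms (CPL⁺, (EM), (bc), (O-K), (O-E)) plus the
da Costa axiom (cl) ¬(α ∧ ¬α) → ∘α, with Modus Ponens and O-necessitation. -/
inductive ThmDmbCcl : Form → Prop
  | A1 (α β : Form) : ThmDmbCcl (α.imp (β.imp α))
  | A2 (α β γ : Form) : ThmDmbCcl ((α.imp (β.imp γ)).imp ((α.imp β).imp (α.imp γ)))
  | A3 (α β : Form) : ThmDmbCcl (α.imp (β.imp (α.and β)))
  | A4 (α β : Form) : ThmDmbCcl ((α.and β).imp α)
  | A5 (α β : Form) : ThmDmbCcl ((α.and β).imp β)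
  | A6 (α β : Form) : ThmDmbCcl (α.imp (α.or β))
  | A7 (α β : Form) : ThmDmbCcl (β.imp (α.or β))
  | A8 (α β γ : Form) : ThmDmbCcl ((α.imp γ).imp ((β.imp γ).imp ((α.or β).imp γ)))
  | A9 (α β : Form) : ThmDmbCcl (((α.imp β).imp α).imp α)
  | EM (α : Form) : ThmDmbCcl (α.or α.neg)
  | bc (α β : Form) : ThmDmbCcl (α.circ.imp (α.imp (α.neg.imp β)))
  | cl (α : Form) : ThmDmbCcl ((α.and α.neg).neg.imp α.circ)
  | OK (α β : Form) : ThmDmbCcl ((α.imp β).obl.imp (α.obl.imp β.obl))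
  | OE (α : Form) : ThmDmbCcl (α.bot.obl.imp α.bot)
  | mp {α β : Form} : ThmDmbCcl (α.imp β) → ThmDmbCcl α → ThmDmbCcl β
  | nec {α : Form} : ThmDmbCcl α → ThmDmbCcl α.obl

/-- conj γ [γ₂,…,γ_k] = γ ∧ γ₂ ∧ … ∧ γ_k -/
def conj (γ : Form) : List Form → Form
  | [] => γ
  | δ :: l => γ.and (conj δ l)

/-- Γ ⊢_DmbCcl φ iff ⊢ φ or ⊢ (γ₁ ∧ … ∧ γ_k) → φ for some γ₁,…,γ_k ∈ Γ, k ≥ 1. -/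
def DerivDmbCcl (Γ : Set Form) (φ : Form) : Prop :=
  ThmDmbCcl φ ∨ ∃ (γ : Form) (l : List Form),
    (∀ δ ∈ γ :: l, δ ∈ Γ) ∧ ThmDmbCcl ((conj γ l).imp φ)

/-- The three snapshots T = (1,0), t = (1,1), F = (0,1). -/
inductive SV : Type
  | T | t | F
deriving DecidableEq

/-- First coordinate of a snapshot. -/
def SV.p1 : SV → Bool
  | .T => true | .t => true | .F => false

/-- Second coordinate of a snapshot. -/
def SV.p2 : SV → Bool
  | .T => false | .t => true | .F => true

/-- Designated values: D = {T, t}, i.e. first coordinate is 1. -/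
def SV.desig (a : SV) : Prop := a.p1 = true

/-- Swap Kripke model conditions for DmbCcl on a serial frame (W,R):
the DmbCciw conditions (with ∘ interpreted by ∘̃₁) plus the restriction
that v_w(α) = t implies v_w(α ∧ ¬α) = T. -/
structure IsModelDmbCcl {W : Type} (R : W → W → Prop) (v : W → Form → SV) : Prop where
  serial : ∀ w, ∃ w', R w w'
  and_ : ∀ w α β, (v w (α.and β)).p1 = ((v w α).p1 && (v w β).p1)
  or_ : ∀ w α β, (v w (α.or β)).p1 = ((v w α).p1 || (v w β).p1)
  imp_ : ∀ w α β, (v w (α.imp β)).p1 = (!(v w α).p1 || (v w β).p1)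
  neg_ : ∀ w α, (v w α.neg).p1 = (v w α).p2
  circ_ : ∀ w α, (v w α.circ).p1 = !((v w α).p1 && (v w α).p2)
  obl_ : ∀ w α, ((v w α.obl).p1 = true ↔ ∀ w', R w w' → (v w' α).p1 = true)
  cl_ : ∀ w α, v w α = SV.t → v w (α.and α.neg) = SV.T

/-- Γ ⊨_DmbCcl φ : semantic consequence over all swap Kripke models for DmbCcl. -/
def SemDmbCcl (Γ : Set Form) (φ : Form) : Prop :=
  ∀ (W : Type) (R : W → W → Prop) (v : W → Form → SV), Nonempty W →
    IsModelDmbCcl R v → ∀ w : W, (∀ γ ∈ Γ, (v w γ).desig) → (v w φ).desig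

/-!
Induction on derivations: every axiom is designated at every world of every model, and both
rules preserve this (necessitation because it holds at all worlds). (O-E) uses seriality, since
`⊥_α` is never designated; (cl) uses the extra model condition: if `α` has both coordinates `1`
then `α = t`, so `α ∧ ¬α` takes the value `T` and `¬(α ∧ ¬α)` is not designated.
-/

theorem SV.p1_or_p2 (a : SV) : (a.p1 || a.p2) = true := by
  cases a <;> rfl

theorem SV.eq_t_of_p1_of_p2 {a : SV} (h₁ : a.p1 = true) (h₂ : a.p2 = true) : a = SV.t := by
  cases a <;> simp_all [SV.p1, SV.p2]

namespace IsModelDmbCcl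

variable {W : Type} {R : W → W → Prop} {v : W → Form → SV}

theorem p1_imp_iff (M : IsModelDmbCcl R v) (w : W) (α β : Form) :
    (v w (α.imp β)).p1 = true ↔ ((v w α).p1 = true → (v w β).p1 = true) := by
  rw [M.imp_]
  cases (v w α).p1 <;> simp

theorem p1_bot (M : IsModelDmbCcl R v) (w : W) (α : Form) : (v w α.bot).p1 = false := by
  simp only [Form.bot, M.and_, M.neg_, M.circ_]
  cases (v w α).p1 <;> cases (v w α).p2 <;> rfl

theorem p1_conj (M : IsModelDmbCcl R v) (w : W) (γ : Form) (l : List Form)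
    (h : ∀ δ ∈ γ :: l, (v w δ).p1 = true) : (v w (conj γ l)).p1 = true := by
  induction l generalizing γ with
  | nil => exact h γ List.mem_cons_self
  | cons δ l ih =>
    simp only [conj, M.and_, h γ List.mem_cons_self, Bool.true_and]
    exact ih δ fun x hx => h x (List.mem_cons_of_mem γ hx)

end IsModelDmbCcl

theorem ThmDmbCcl.p1_eq_true {φ : Form} (h : ThmDmbCcl φ) {W : Type} {R : W → W → Prop}
    {v : W → Form → SV} (M : IsModelDmbCcl R v) (w : W) : (v w φ).p1 = true := by
  induction h generalizing w with
  | A1 α β | A2 α β _ | A3 α β | A4 α β | A5 α β | A6 α β | A7 α β | A8 α β _ | A9 α β =>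
    simp only [M.imp_, M.and_, M.or_]
    cases (v w α).p1 <;> cases (v w β).p1 <;> simp
  | EM α => simpa only [M.or_, M.neg_] using (v w α).p1_or_p2
  | bc α β =>
    simp only [M.imp_, M.circ_, M.neg_]
    cases (v w α).p1 <;> cases (v w α).p2 <;> simp
  | cl α =>
    simp only [M.imp_, M.neg_, M.circ_]
    cases h : ((v w α).p1 && (v w α).p2)
    · simp
    · rw [Bool.and_eq_true] at h
      simp [M.cl_ w α (SV.eq_t_of_p1_of_p2 h.1 h.2), SV.p2]
  | OK α β =>
    simp only [M.p1_imp_iff, M.obl_]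
    exact fun hαβ hα w' hw' => hαβ w' hw' (hα w' hw')
  | OE α =>
    rw [M.p1_imp_iff, M.obl_]
    obtain ⟨w', hw'⟩ := M.serial w
    exact fun h => absurd (h w' hw') (by simp [M.p1_bot])
  | mp _ _ ihαβ ihα => exact (M.p1_imp_iff w _ _).1 (ihαβ w) (ihα w)
  | nec _ ih => exact (M.obl_ w _).2 fun w' _ => ih w'

/-- Soundness of DmbCcl w.r.t. swap Kripke models. -/
theorem DmbCcl_soundness (Γ : Set Form) (φ : Form) :
    DerivDmbCcl Γ φ → SemDmbCcl Γ φ := by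
  rintro (h | ⟨γ, l, hΓl, h⟩) W R v _ M w hΓ
  · exact h.p1_eq_true M w
  · exact (M.p1_imp_iff w _ _).1 (h.p1_eq_true M w) (M.p1_conj w γ l fun δ hδ => hΓ δ (hΓl δ hδ))
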